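/- For every point x ∈ ℝ¹³⁵ = (ℝ⁵)²⁷, there exist real numbers λ¹, …, λ²⁷, λ²⁸, λ²⁹ such that the Lagrange 1-form Σᵢ dGᵢ + Σᵢ λⁱ ωᵢ + λ²⁸ Σᵢ dEᵢ + λ²⁹ Σᵢ dQᵢ vanishes at x (as a linear functional on ℝ¹³⁵) if and only if I₁(x) = ⋯ = I₂₇(x) and P₁(x) = ⋯ = P₂₇(x). -/

import Mathlib

/- The product economy ℝ¹³⁵ = (ℝ⁵)²⁷ is modeled as `Fin 27 → Fin 5 → ℝ`;
   within each factor, index 0 = G, 1 = I, 2 = E, 3 = P, 4 = Q. -/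

/-- Gibbs–Pfaff covector of the `i`-th economy at the point `x`:
`ωᵢ = dGᵢ − Iᵢ(x) dEᵢ + Pᵢ(x) dQᵢ`, a linear functional on ℝ¹³⁵. -/
noncomputable def ω (x : Fin 27 → Fin 5 → ℝ) (i : Fin 27) :
    (Fin 27 → Fin 5 → ℝ) → ℝ :=
  fun v => v i 0 - x i 1 * v i 2 + x i 3 * v i 4

/-! The Lagrange form is a linear functional with coefficients `1 + λⁱ` on `dGᵢ`,
`λ²⁸ − λⁱ Iᵢ` on `dEᵢ` and `λ²⁹ + λⁱ Pᵢ` on `dQᵢ`; it vanishes iff all of them do, i.e.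
`λⁱ = −1`, `Iᵢ = −λ²⁸` and `Pᵢ = λ²⁹` for every `i`. -/

open Finset

noncomputable def lagrangeCoeff (x : Fin 27 → Fin 5 → ℝ) (lam : Fin 27 → ℝ) (lam28 lam29 : ℝ)
    (i : Fin 27) : Fin 5 → ℝ :=
  ![1 + lam i, 0, lam28 - lam i * x i 1, 0, lam29 + lam i * x i 3]

theorem forall_sum_sum_mul_eq_zero_iff {ι κ R : Type*} [Fintype ι] [Fintype κ]
    [DecidableEq ι] [DecidableEq κ] [Semiring R] (c : ι → κ → R) :
    (∀ v : ι → κ → R, ∑ i, ∑ k, c i k * v i k = 0) ↔ c = 0 := by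
  refine ⟨fun h => funext fun i => funext fun k => ?_, fun h v => by simp [h]⟩
  simpa [Pi.single_apply, ite_apply] using h (Pi.single i (Pi.single k 1))

theorem lagrange_form_eq_sum_lagrangeCoeff (x : Fin 27 → Fin 5 → ℝ) (lam : Fin 27 → ℝ)
    (lam28 lam29 : ℝ) (v : Fin 27 → Fin 5 → ℝ) :
    (∑ i, v i 0) + (∑ i, lam i * ω x i v) + lam28 * (∑ i, v i 2) + lam29 * (∑ i, v i 4) =
      ∑ i, ∑ k, lagrangeCoeff x lam lam28 lam29 i k * v i k := by
  simp only [mul_sum, ← sum_add_distrib]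
  refine sum_congr rfl fun i _ => ?_
  simp only [Fin.sum_univ_five, lagrangeCoeff, ω, Fin.isValue, Matrix.cons_val_zero,
    Matrix.cons_val_one, Matrix.cons_val, zero_mul, add_zero]
  ring

theorem lagrangeCoeff_eq_zero_iff (x : Fin 27 → Fin 5 → ℝ) (lam : Fin 27 → ℝ)
    (lam28 lam29 : ℝ) :
    lagrangeCoeff x lam lam28 lam29 = 0 ↔ ∀ i, lam i = -1 ∧ x i 1 = -lam28 ∧ x i 3 = lam29 := by
  simp only [funext_iff, Pi.zero_apply]
  refine forall_congr' fun i => ?_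
  simp only [lagrangeCoeff, Fin.isValue, Fin.forall_fin_succ, Matrix.cons_val_zero,
    Matrix.cons_val_succ, Matrix.cons_val_fin_one, forall_const, true_and]
  constructor
  · rintro ⟨hG, hE, hQ⟩
    have hlam : lam i = -1 := by linarith
    rw [hlam] at hE hQ
    exact ⟨hlam, by linarith, by linarith⟩
  · rintro ⟨hlam, hI, hP⟩
    rw [hlam, hI, hP]
    norm_num

/-- For every `x ∈ ℝ¹³⁵`, there exist multipliers `λ¹, …, λ²⁷, λ²⁸, λ²⁹` making
the Lagrange 1-form `Σᵢ dGᵢ + Σᵢ λⁱ ωᵢ + λ²⁸ Σᵢ dEᵢ + λ²⁹ Σᵢ dQᵢ` vanish at `x`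
if and only if `I₁(x) = ⋯ = I₂₇(x)` and `P₁(x) = ⋯ = P₂₇(x)`. -/
theorem eu_balance_total_increase (x : Fin 27 → Fin 5 → ℝ) :
    (∃ (lam : Fin 27 → ℝ) (lam28 lam29 : ℝ), ∀ v : Fin 27 → Fin 5 → ℝ,
        (∑ i, v i 0) + (∑ i, lam i * ω x i v)
          + lam28 * (∑ i, v i 2) + lam29 * (∑ i, v i 4) = 0) ↔
    ((∀ i j : Fin 27, x i 1 = x j 1) ∧ (∀ i j : Fin 27, x i 3 = x j 3)) := by
  simp_rw [lagrange_form_eq_sum_lagrangeCoeff, forall_sum_sum_mul_eq_zero_iff,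
    lagrangeCoeff_eq_zero_iff]
  constructor
  · rintro ⟨lam, lam28, lam29, h⟩
    exact ⟨fun i j => by rw [(h i).2.1, (h j).2.1], fun i j => by rw [(h i).2.2, (h j).2.2]⟩
  · rintro ⟨hI, hP⟩
    exact ⟨fun _ => -1, -x 0 1, x 0 3, fun i => ⟨rfl, by rw [neg_neg, hI], hP i 0⟩⟩
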